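/- For the one-dimensional smoothed density f(x,t) = Σᵢ wᵢ G(μᵢ, σᵢ² + t)(x) with weights summing to 1, let F(x,t) = -log f(x,t); if t ≥ (max_i μᵢ - min_i μᵢ)², then x ↦ F(x,t) is convex on [min_i μᵢ, max_i μᵢ]. -/

import Mathlib

/-- 1D Gaussian density with mean `μ` and variance `v`. -/
noncomputable def gauss1 (μ v x : ℝ) : ℝ :=
  (2 * Real.pi * v) ^ (-(1:ℝ)/2) * Real.exp (-(x - μ) ^ 2 / (2 * v))

lemma gauss1_pos {μ v : ℝ} (hv : 0 < v) (x : ℝ) : 0 < gauss1 μ v x := by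
  unfold gauss1
  positivity

lemma gauss1_hasDerivAt {μ v : ℝ} (hv : 0 < v) (x : ℝ) :
    HasDerivAt (gauss1 μ v) ((μ - x) / v * gauss1 μ v x) x := by
  have h1 : HasDerivAt (fun y : ℝ => -(y - μ) ^ 2 / (2 * v)) ((μ - x) / v) x := by
    have h := (((hasDerivAt_id x).sub_const μ).pow 2).neg.div_const (2 * v)
    refine h.congr_deriv ?_
    simp only [id]
    field_simp
    ring
  have h2 := (h1.exp).const_mul ((2 * Real.pi * v) ^ (-(1:ℝ)/2))
  refine h2.congr_deriv ?_
  unfold gauss1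
  ring

lemma pair_bound_aux {t va vb D a b : ℝ} (ht : 0 < t) (hva : t ≤ va) (hvb : va ≤ vb)
    (hD : D ^ 2 ≤ t) (ha : |a| ≤ D) (hab : |a - b| ≤ D) :
    (a / va - b / vb) ^ 2 ≤ 1 / va := by
  have hva0 : 0 < va := ht.trans_le hva
  have hvb0 : 0 < vb := hva0.trans_le hvb
  have hD0 : 0 ≤ D := (abs_nonneg a).trans ha
  have h1 : 0 ≤ 1 / va - 1 / vb := by
    have := one_div_le_one_div_of_le hva0 hvb
    linarith
  have habs : |a / va - b / vb| ≤ D / va := by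
    have heq : a / va - b / vb = a * (1 / va - 1 / vb) + (a - b) / vb := by
      field_simp; ring
    rw [heq]
    calc |a * (1 / va - 1 / vb) + (a - b) / vb|
        ≤ |a * (1 / va - 1 / vb)| + |(a - b) / vb| := abs_add_le _ _
      _ = |a| * (1 / va - 1 / vb) + |a - b| / vb := by
          rw [abs_mul, abs_div, abs_of_nonneg h1, abs_of_pos hvb0]
      _ ≤ D * (1 / va - 1 / vb) + D / vb := by
          gcongr
      _ = D / va := by field_simp; ring
  have h2 := abs_le.mp habs
  calc (a / va - b / vb) ^ 2 ≤ (D / va) ^ 2 := sq_le_sq' (by linarith) h2.2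
    _ = D ^ 2 / va ^ 2 := by rw [div_pow]
    _ ≤ va / va ^ 2 := by gcongr; linarith
    _ = 1 / va := by rw [sq]; field_simp

lemma pair_bound {t va vb D a b : ℝ} (ht : 0 < t) (hva : t ≤ va) (hvb : t ≤ vb)
    (hD : D ^ 2 ≤ t) (ha : |a| ≤ D) (hb : |b| ≤ D) (hab : |a - b| ≤ D) :
    (a / va - b / vb) ^ 2 ≤ 1 / va + 1 / vb := by
  have hva0 : 0 < va := ht.trans_le hva
  have hvb0 : 0 < vb := ht.trans_le hvb
  rcases le_total va vb with h | h
  · have := pair_bound_aux ht hva h hD ha hab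
    have : (a / va - b / vb) ^ 2 ≤ 1 / va := this
    have hpos : 0 ≤ 1 / vb := by positivity
    linarith
  · have hba : |b - a| ≤ D := by rwa [abs_sub_comm]
    have := pair_bound_aux ht hvb h hD hb hba
    have heq : (a / va - b / vb) ^ 2 = (b / vb - a / va) ^ 2 := by ring
    have hpos : 0 ≤ 1 / va := by positivity
    linarith [heq ▸ this]

/-- For the 1D smoothed density `f(x,t) = Σᵢ wᵢ G(μᵢ, σᵢ² + t)(x)`, if
`t ≥ (maxᵢ μᵢ - minᵢ μᵢ)²` then `x ↦ -log f(x,t)` is convex on `[minᵢ μᵢ, maxᵢ μᵢ]`. -/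
theorem oneD_smoothed_energy_convex {n : ℕ}
    (hne : (Finset.univ : Finset (Fin n)).Nonempty)
    (w μs σ2 : Fin n → ℝ) (hw : ∀ i, 0 < w i) (hsum : ∑ i, w i = 1)
    (hσ : ∀ i, 0 ≤ σ2 i) (t : ℝ) (ht : 0 < t)
    (htD : (Finset.univ.sup' hne μs - Finset.univ.inf' hne μs) ^ 2 ≤ t) :
    ConvexOn ℝ (Set.Icc (Finset.univ.inf' hne μs) (Finset.univ.sup' hne μs))
      (fun x => -Real.log (∑ i, w i * gauss1 (μs i) (σ2 i + t) x)) := by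
  classical
  set m := Finset.univ.inf' hne μs with hm
  set M := Finset.univ.sup' hne μs with hM
  set v : Fin n → ℝ := fun i => σ2 i + t with hvdef
  have hvpos : ∀ i, 0 < v i := fun i => by have := hσ i; simp only [hvdef]; linarith
  have hvt : ∀ i, t ≤ v i := fun i => by have := hσ i; simp only [hvdef]; linarith
  set g : Fin n → ℝ → ℝ := fun i => gauss1 (μs i) (v i) with hgdef
  have hgpos : ∀ i x, 0 < g i x := fun i x => gauss1_pos (hvpos i) x
  set f : ℝ → ℝ := fun x => ∑ i, w i * g i x with hfdef
  have hfpos : ∀ x, 0 < f x :=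
    fun x => Finset.sum_pos (fun i _ => mul_pos (hw i) (hgpos i x)) hne
  set d : Fin n → ℝ → ℝ := fun i x => (μs i - x) / v i with hddef
  set f1 : ℝ → ℝ := fun x => ∑ i, d i x * (w i * g i x) with hf1def
  set e : Fin n → ℝ → ℝ := fun i x => (d i x) ^ 2 - 1 / v i with hedef
  set f2 : ℝ → ℝ := fun x => ∑ i, e i x * (w i * g i x) with hf2def
  have hg' : ∀ i x, HasDerivAt (g i) (d i x * g i x) x := fun i x => by
    simpa [hddef, hgdef] using gauss1_hasDerivAt (hvpos i) x
  have hf' : ∀ x, HasDerivAt f (f1 x) x := fun x => by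
    apply HasDerivAt.fun_sum
    intro i _
    have h := (hg' i x).const_mul (w i)
    refine h.congr_deriv ?_
    ring
  have hd' : ∀ i x, HasDerivAt (fun y => d i y) (-(1 / v i)) x := fun i x => by
    have h := ((hasDerivAt_const x (μs i)).sub (hasDerivAt_id x)).div_const (v i)
    refine h.congr_deriv ?_
    ring
  have hf1' : ∀ x, HasDerivAt f1 (f2 x) x := fun x => by
    apply HasDerivAt.fun_sum
    intro i _
    have h := (hd' i x).mul ((hg' i x).const_mul (w i))
    refine h.congr_deriv ?_
    simp only [hedef]
    ring
  set F : ℝ → ℝ := fun x => -Real.log (f x) with hFdef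
  have hF' : ∀ x, HasDerivAt F (-(f1 x / f x)) x := fun x =>
    ((hf' x).log (hfpos x).ne').neg
  have hderivF : deriv F = fun x => -(f1 x / f x) := funext fun x => (hF' x).deriv
  have hF2 : ∀ x, HasDerivAt (deriv F)
      ((f1 x * f1 x - f2 x * f x) / (f x) ^ 2) x := fun x => by
    rw [hderivF]
    have heq : (fun y => -(f1 y / f y)) = fun y => (-f1 y) / f y := by
      funext y; rw [neg_div]
    rw [heq]
    have h := ((hf1' x).neg.div (hf' x) (hfpos x).ne')
    refine h.congr_deriv ?_
    simp only [Pi.neg_apply]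
    ring
  -- key inequality on the interval
  have key : ∀ x ∈ Set.Icc m M, f2 x * f x ≤ f1 x * f1 x := by
    intro x hx
    obtain ⟨hxm, hxM⟩ := hx
    have hμ : ∀ i, m ≤ μs i ∧ μs i ≤ M := fun i =>
      ⟨Finset.inf'_le _ (Finset.mem_univ i), Finset.le_sup' _ (Finset.mem_univ i)⟩
    set D : ℝ := M - m with hDdef
    have hbd : ∀ i j, (d i x - d j x) ^ 2 ≤ 1 / v i + 1 / v j := by
      intro i j
      have hi := hμ i
      have hj := hμ j
      have ha : |μs i - x| ≤ D := abs_le.mpr ⟨by linarith, by linarith⟩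
      have hb : |μs j - x| ≤ D := abs_le.mpr ⟨by linarith, by linarith⟩
      have hab : |(μs i - x) - (μs j - x)| ≤ D := by
        have : (μs i - x) - (μs j - x) = μs i - μs j := by ring
        rw [this]
        exact abs_le.mpr ⟨by linarith, by linarith⟩
      simpa [hddef] using
        pair_bound ht (hvt i) (hvt j) htD ha hb hab
    have A : f2 x * f x = ∑ i, ∑ j, (e i x * (w i * g i x)) * (w j * g j x) :=
      Finset.sum_mul_sum _ _ _ _
    have A2 : f2 x * f x = ∑ i, ∑ j, (e j x * (w j * g j x)) * (w i * g i x) :=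
      A.trans Finset.sum_comm
    have B : f1 x * f1 x
        = ∑ i, ∑ j, (d i x * (w i * g i x)) * (d j x * (w j * g j x)) :=
      Finset.sum_mul_sum _ _ _ _
    have expand : 2 * (f2 x * f x - f1 x * f1 x)
        = ∑ i, ∑ j, (w i * g i x) * (w j * g j x)
            * ((d i x - d j x) ^ 2 - (1 / v i + 1 / v j)) := by
      have step : ∀ i j : Fin n,
          (w i * g i x) * (w j * g j x) * ((d i x - d j x) ^ 2 - (1 / v i + 1 / v j))
          = (e i x * (w i * g i x)) * (w j * g j x)
            + (e j x * (w j * g j x)) * (w i * g i x)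
            - 2 * ((d i x * (w i * g i x)) * (d j x * (w j * g j x))) := by
        intro i j
        simp only [hedef]
        ring
      calc 2 * (f2 x * f x - f1 x * f1 x)
          = (∑ i, ∑ j, (e i x * (w i * g i x)) * (w j * g j x))
            + (∑ i, ∑ j, (e j x * (w j * g j x)) * (w i * g i x))
            - 2 * ∑ i, ∑ j, (d i x * (w i * g i x)) * (d j x * (w j * g j x)) := by
            rw [← A, ← A2, ← B]; ring
        _ = ∑ i, ∑ j, ((e i x * (w i * g i x)) * (w j * g j x)
              + (e j x * (w j * g j x)) * (w i * g i x)
              - 2 * ((d i x * (w i * g i x)) * (d j x * (w j * g j x)))) := by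
            rw [Finset.mul_sum, ← Finset.sum_add_distrib, ← Finset.sum_sub_distrib]
            apply Finset.sum_congr rfl
            intro i _
            rw [Finset.mul_sum, ← Finset.sum_add_distrib, ← Finset.sum_sub_distrib]
        _ = ∑ i, ∑ j, (w i * g i x) * (w j * g j x)
              * ((d i x - d j x) ^ 2 - (1 / v i + 1 / v j)) := by
            apply Finset.sum_congr rfl
            intro i _
            apply Finset.sum_congr rfl
            intro j _
            rw [step i j]
    have hle : (∑ i, ∑ j, (w i * g i x) * (w j * g j x)
        * ((d i x - d j x) ^ 2 - (1 / v i + 1 / v j))) ≤ 0 := by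
      apply Finset.sum_nonpos
      intro i _
      apply Finset.sum_nonpos
      intro j _
      apply mul_nonpos_of_nonneg_of_nonpos
      · exact mul_nonneg (mul_pos (hw i) (hgpos i x)).le (mul_pos (hw j) (hgpos j x)).le
      · linarith [hbd i j]
    nlinarith [expand ▸ hle]
  -- conclude convexity
  apply convexOn_of_deriv2_nonneg (convex_Icc m M)
  · intro x _
    exact ((hF' x).differentiableAt.continuousAt).continuousWithinAt
  · intro x _
    exact (hF' x).differentiableAt.differentiableWithinAt
  · intro x _
    exact (hF2 x).differentiableAt.differentiableWithinAt
  · intro x hx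
    have hxI : x ∈ Set.Icc m M := interior_subset hx
    have h2 : deriv^[2] F x = (f1 x * f1 x - f2 x * f x) / (f x) ^ 2 := by
      show deriv (deriv^[1] F) x = _
      simp only [Function.iterate_one]
      exact (hF2 x).deriv
    rw [h2]
    apply div_nonneg
    · linarith [key x hxI]
    · exact sq_nonneg _
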